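/- Fix real matrices A (n×n) and B (n×m). For a symmetric positive semidefinite n×n matrix Q and a symmetric positive definite m×m matrix R, let P_T(Q,R) be defined by the Riccati iteration P_0(Q,R) = 0 and P_{k+1}(Q,R) = AᵀP_k(Q,R)A − AᵀP_k(Q,R)B(BᵀP_k(Q,R)B+R)⁻¹BᵀP_k(Q,R)A + Q. Let Q̲, Q, Q̄ be symmetric positive definite n×n matrices with Q̲ ⪯ Q ⪯ Q̄, let R, R̄ be symmetric positive definite m×m matrices with R ⪯ R̄, let T ∈ ℕ, and let ρ > 0 be a real number such that ρ·P_T(Q̄,R̄) ⪯ Q̲. Then for every x ∈ ℝⁿ, xᵀQx ≥ ρ·xᵀP_T(Q,R)x; that is, ρ·P_T(Q,R) ⪯ Q. -/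

import Mathlib

/-!
With `S = BᵀPB + R`, completing the square in `K` shows that one Riccati step is the least,
in the Loewner order, of the closed-loop costs `(A + BK)ᵀP(A + BK) + KᵀRK + Q` over feedback
gains `K`, attained at `K = -S⁻¹BᵀPA`. Each cost is monotone in `(P, Q, R)`, hence so is the
step, and by induction `P_T(Q, R) ⪯ P_T(Q̄, R̄)`. Then `ρ P_T(Q, R) ⪯ ρ P_T(Q̄, R̄) ⪯ Q̲ ⪯ Q`.
-/

open Matrix

/-- The finite-horizon Riccati iteration with `P 0 = 0` and
`P (k+1) = AᵀP_kA − AᵀP_kB(BᵀP_kB+R)⁻¹BᵀP_kA + Q`. -/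
noncomputable def riccati {n m : ℕ} (A : Matrix (Fin n) (Fin n) ℝ)
    (B : Matrix (Fin n) (Fin m) ℝ) (Q : Matrix (Fin n) (Fin n) ℝ)
    (R : Matrix (Fin m) (Fin m) ℝ) : ℕ → Matrix (Fin n) (Fin n) ℝ
  | 0 => 0
  | k + 1 =>
      Aᵀ * riccati A B Q R k * A -
        Aᵀ * riccati A B Q R k * B * (Bᵀ * riccati A B Q R k * B + R)⁻¹ *
          Bᵀ * riccati A B Q R k * A + Q

/-- The Loewner order on real square matrices: `X ⪯ Y` iff `Y − X` is positive semidefinite. -/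
def loewnerLE {n : ℕ} (X Y : Matrix (Fin n) (Fin n) ℝ) : Prop := (Y - X).PosSemidef

open scoped MatrixOrder

namespace Matrix

lemma PosSemidef.transpose_mul_mul_same {ι κ : Type*} [Fintype ι] [Fintype κ]
    {P : Matrix ι ι ℝ} (hP : P.PosSemidef) (X : Matrix ι κ ℝ) : (Xᵀ * P * X).PosSemidef := by
  simpa only [conjTranspose_eq_transpose_of_trivial] using hP.conjTranspose_mul_mul_same X

lemma transpose_mul_mul_le_transpose_mul_mul {ι κ : Type*} [Fintype ι] [Fintype κ]
    {P₁ P₂ : Matrix ι ι ℝ} (hP : P₁ ≤ P₂) (X : Matrix ι κ ℝ) : Xᵀ * P₁ * X ≤ Xᵀ * P₂ * X := by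
  rw [le_iff, ← Matrix.sub_mul, ← Matrix.mul_sub]
  exact hP.transpose_mul_mul_same X

lemma transpose_mul_mul_add_inv_mul {ι κ : Type*} [Fintype κ] [DecidableEq κ]
    {S : Matrix κ κ ℝ} [Invertible S] (hS : Sᵀ = S) (K N : Matrix κ ι ℝ) :
    (K + S⁻¹ * N)ᵀ * S * (K + S⁻¹ * N) = Kᵀ * S * K + Kᵀ * N + Nᵀ * K + Nᵀ * S⁻¹ * N := by
  rw [transpose_add, transpose_mul, transpose_nonsing_inv, hS]
  simp only [Matrix.add_mul, Matrix.mul_add, Matrix.mul_assoc,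
    inv_mul_cancel_left_of_invertible, mul_inv_cancel_left_of_invertible]
  abel

lemma dotProduct_mulVec_le_of_le {ι : Type*} [Fintype ι] {M N : Matrix ι ι ℝ} (h : M ≤ N)
    (x : ι → ℝ) : x ⬝ᵥ (M *ᵥ x) ≤ x ⬝ᵥ (N *ᵥ x) := by
  have := (le_iff.mp h).dotProduct_mulVec_nonneg x
  rwa [star_trivial, sub_mulVec, dotProduct_sub, sub_nonneg] at this

end Matrix

section RiccatiStep

variable {ι κ : Type*} [Fintype ι] [Fintype κ]
variable (A : Matrix ι ι ℝ) (B : Matrix ι κ ℝ) (Q : Matrix ι ι ℝ) (R : Matrix κ κ ℝ)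
  (P : Matrix ι ι ℝ)

def riccatiCost (K : Matrix κ ι ℝ) : Matrix ι ι ℝ :=
  (A + B * K)ᵀ * P * (A + B * K) + Kᵀ * R * K + Q

variable {A B Q R P}

lemma riccatiCost_eq_of_isSymm (hP : P.IsSymm) (K : Matrix κ ι ℝ) :
    riccatiCost A B Q R P K = Aᵀ * P * A + Kᵀ * (Bᵀ * P * B + R) * K + Kᵀ * (Bᵀ * P * A)
      + (Bᵀ * P * A)ᵀ * K + Q := by
  rw [riccatiCost, transpose_mul, transpose_mul, transpose_transpose, hP.eq]
  simp only [transpose_add, transpose_mul, Matrix.add_mul, Matrix.mul_add, Matrix.mul_assoc]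
  abel

lemma riccatiCost_nonneg (hP : 0 ≤ P) (hQ : 0 ≤ Q) (hR : 0 ≤ R) (K : Matrix κ ι ℝ) :
    0 ≤ riccatiCost A B Q R P K :=
  add_nonneg (add_nonneg (hP.posSemidef.transpose_mul_mul_same _).nonneg
    (hR.posSemidef.transpose_mul_mul_same K).nonneg) hQ

lemma riccatiCost_mono {P₁ P₂ Q₁ Q₂ : Matrix ι ι ℝ} {R₁ R₂ : Matrix κ κ ℝ} (hP : P₁ ≤ P₂)
    (hQ : Q₁ ≤ Q₂) (hR : R₁ ≤ R₂) (K : Matrix κ ι ℝ) :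
    riccatiCost A B Q₁ R₁ P₁ K ≤ riccatiCost A B Q₂ R₂ P₂ K :=
  add_le_add (add_le_add (transpose_mul_mul_le_transpose_mul_mul hP _)
    (transpose_mul_mul_le_transpose_mul_mul hR K)) hQ

lemma posDef_transpose_mul_mul_add (hP : 0 ≤ P) (hR : R.PosDef) :
    (Bᵀ * P * B + R).PosDef :=
  hR.posSemidef_add (hP.posSemidef.transpose_mul_mul_same B)

variable [DecidableEq κ]
variable (A B Q R P)

noncomputable def riccatiStep : Matrix ι ι ℝ :=
  Aᵀ * P * A - Aᵀ * P * B * (Bᵀ * P * B + R)⁻¹ * Bᵀ * P * A + Q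

noncomputable def riccatiGain : Matrix κ ι ℝ := -((Bᵀ * P * B + R)⁻¹ * (Bᵀ * P * A))

variable {A B Q R P}

lemma riccatiStep_eq_of_isSymm (hP : P.IsSymm) :
    riccatiStep A B Q R P =
      Aᵀ * P * A - (Bᵀ * P * A)ᵀ * (Bᵀ * P * B + R)⁻¹ * (Bᵀ * P * A) + Q := by
  rw [riccatiStep, transpose_mul, transpose_mul, transpose_transpose, hP.eq]
  simp only [Matrix.mul_assoc]

lemma riccatiStep_add_gain_sq (hP : P.IsSymm) (hR : R.IsSymm) (hS : IsUnit (Bᵀ * P * B + R))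
    (K : Matrix κ ι ℝ) :
    riccatiStep A B Q R P + (K - riccatiGain A B R P)ᵀ * (Bᵀ * P * B + R) *
      (K - riccatiGain A B R P) = riccatiCost A B Q R P K := by
  have : Invertible (Bᵀ * P * B + R) := hS.invertible
  have hSt : (Bᵀ * P * B + R)ᵀ = Bᵀ * P * B + R := by
    rw [transpose_add, hR.eq, transpose_mul, transpose_mul, transpose_transpose, hP.eq,
      Matrix.mul_assoc]
  rw [riccatiStep_eq_of_isSymm hP, riccatiGain, sub_neg_eq_add,
    transpose_mul_mul_add_inv_mul hSt, riccatiCost_eq_of_isSymm hP]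
  abel

lemma riccatiStep_le_riccatiCost (hP : 0 ≤ P) (hR : R.PosDef) (K : Matrix κ ι ℝ) :
    riccatiStep A B Q R P ≤ riccatiCost A B Q R P K := by
  have hS := posDef_transpose_mul_mul_add (B := B) hP hR
  rw [← riccatiStep_add_gain_sq (isHermitian_iff_isSymm.mp hP.posSemidef.1)
    (isHermitian_iff_isSymm.mp hR.isHermitian) hS.isUnit K]
  exact le_add_of_nonneg_right (hS.posSemidef.transpose_mul_mul_same _).nonneg

lemma riccatiStep_eq_riccatiCost_riccatiGain (hP : 0 ≤ P) (hR : R.PosDef) :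
    riccatiStep A B Q R P = riccatiCost A B Q R P (riccatiGain A B R P) := by
  rw [← riccatiStep_add_gain_sq (isHermitian_iff_isSymm.mp hP.posSemidef.1)
    (isHermitian_iff_isSymm.mp hR.isHermitian)
    (posDef_transpose_mul_mul_add hP hR).isUnit, sub_self, transpose_zero, Matrix.zero_mul,
    Matrix.zero_mul, add_zero]

lemma riccatiStep_nonneg (hP : 0 ≤ P) (hQ : 0 ≤ Q) (hR : R.PosDef) :
    0 ≤ riccatiStep A B Q R P :=
  riccatiStep_eq_riccatiCost_riccatiGain hP hR ▸
    riccatiCost_nonneg hP hQ hR.posSemidef.nonneg _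

lemma riccatiStep_mono {P₁ P₂ Q₁ Q₂ : Matrix ι ι ℝ} {R₁ R₂ : Matrix κ κ ℝ} (hP₁ : 0 ≤ P₁)
    (hR₁ : R₁.PosDef) (hP : P₁ ≤ P₂) (hQ : Q₁ ≤ Q₂) (hR : R₁ ≤ R₂) :
    riccatiStep A B Q₁ R₁ P₁ ≤ riccatiStep A B Q₂ R₂ P₂ := by
  have hR₂ : R₂.PosDef := by simpa using hR₁.add_posSemidef (le_iff.mp hR)
  calc riccatiStep A B Q₁ R₁ P₁ ≤ riccatiCost A B Q₁ R₁ P₁ (riccatiGain A B R₂ P₂) :=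
        riccatiStep_le_riccatiCost hP₁ hR₁ _
    _ ≤ riccatiCost A B Q₂ R₂ P₂ (riccatiGain A B R₂ P₂) := riccatiCost_mono hP hQ hR _
    _ = riccatiStep A B Q₂ R₂ P₂ :=
        (riccatiStep_eq_riccatiCost_riccatiGain (hP₁.trans hP) hR₂).symm

end RiccatiStep

section Riccati

variable {n m : ℕ} (A : Matrix (Fin n) (Fin n) ℝ) (B : Matrix (Fin n) (Fin m) ℝ)

lemma riccati_succ (Q : Matrix (Fin n) (Fin n) ℝ) (R : Matrix (Fin m) (Fin m) ℝ) (k : ℕ) :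
    riccati A B Q R (k + 1) = riccatiStep A B Q R (riccati A B Q R k) := rfl

lemma riccati_nonneg {Q : Matrix (Fin n) (Fin n) ℝ} {R : Matrix (Fin m) (Fin m) ℝ}
    (hQ : 0 ≤ Q) (hR : R.PosDef) (k : ℕ) : 0 ≤ riccati A B Q R k := by
  induction k with
  | zero => exact le_rfl
  | succ k ih => exact riccati_succ A B Q R k ▸ riccatiStep_nonneg ih hQ hR

lemma riccati_mono {Q₁ Q₂ : Matrix (Fin n) (Fin n) ℝ} {R₁ R₂ : Matrix (Fin m) (Fin m) ℝ}
    (hQ₁ : 0 ≤ Q₁) (hR₁ : R₁.PosDef) (hQ : Q₁ ≤ Q₂) (hR : R₁ ≤ R₂) (k : ℕ) :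
    riccati A B Q₁ R₁ k ≤ riccati A B Q₂ R₂ k := by
  induction k with
  | zero => exact le_rfl
  | succ k ih => exact riccatiStep_mono (riccati_nonneg A B hQ₁ hR₁ k) hR₁ ih hQ hR

end Riccati

theorem riccati_rho_uniform_bound_general {n m : ℕ}
    (A : Matrix (Fin n) (Fin n) ℝ) (B : Matrix (Fin n) (Fin m) ℝ)
    (Qlb Q Qub : Matrix (Fin n) (Fin n) ℝ) (R Rub : Matrix (Fin m) (Fin m) ℝ)
    (hQ : Q.PosDef)
    (hR : R.PosDef)
    (hQ₁ : loewnerLE Qlb Q) (hQ₂ : loewnerLE Q Qub) (hR₁ : loewnerLE R Rub)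
    (T : ℕ) (ρ : ℝ) (hρ : 0 < ρ)
    (hbound : loewnerLE (ρ • riccati A B Qub Rub T) Qlb) :
    (∀ x : Fin n → ℝ, x ⬝ᵥ (Q *ᵥ x) ≥ ρ * (x ⬝ᵥ (riccati A B Q R T *ᵥ x))) ∧
    loewnerLE (ρ • riccati A B Q R T) Q := by
  -- `loewnerLE X Y` unfolds to `X ≤ Y` for the `MatrixOrder` order.
  have hρP : ρ • riccati A B Q R T ≤ Q :=
    calc ρ • riccati A B Q R T ≤ ρ • riccati A B Qub Rub T :=
          smul_le_smul_of_nonneg_left (riccati_mono A B hQ.posSemidef.nonneg hR hQ₂ hR₁ T) hρ.le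
      _ ≤ Qlb := hbound
      _ ≤ Q := hQ₁
  refine ⟨fun x => ?_, hρP⟩
  simpa only [smul_mulVec, dotProduct_smul, smul_eq_mul] using dotProduct_mulVec_le_of_le hρP x

/-- Construction of the constant `ρ_T`: if `ρ·P_T(Q̄,R̄) ⪯ Q̲`, then for all admissible
weights `Q̲ ⪯ Q ⪯ Q̄`, `R ⪯ R̄`, we have `ρ·P_T(Q,R) ⪯ Q`, i.e. `xᵀQx ≥ ρ·xᵀP_T(Q,R)x`. -/
theorem riccati_rho_uniform_bound {n m : ℕ}
    (A : Matrix (Fin n) (Fin n) ℝ) (B : Matrix (Fin n) (Fin m) ℝ)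
    (Qlb Q Qub : Matrix (Fin n) (Fin n) ℝ) (R Rub : Matrix (Fin m) (Fin m) ℝ)
    (hQlb : Qlb.PosDef) (hQ : Q.PosDef) (hQub : Qub.PosDef)
    (hR : R.PosDef) (hRub : Rub.PosDef)
    (hQ₁ : loewnerLE Qlb Q) (hQ₂ : loewnerLE Q Qub) (hR₁ : loewnerLE R Rub)
    (T : ℕ) (ρ : ℝ) (hρ : 0 < ρ)
    (hbound : loewnerLE (ρ • riccati A B Qub Rub T) Qlb) :
    (∀ x : Fin n → ℝ, x ⬝ᵥ (Q *ᵥ x) ≥ ρ * (x ⬝ᵥ (riccati A B Q R T *ᵥ x))) ∧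
    loewnerLE (ρ • riccati A B Q R T) Q :=
  riccati_rho_uniform_bound_general A B Qlb Q Qub R Rub hQ hR hQ₁ hQ₂ hR₁ T ρ hρ hbound
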